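/- Let 1 ≤ δ ≤ σ, ρ₀ > 0, and for ρ with ρ₀/4 ≤ ρ ≤ ρ₀ define M_{ρ,β} = ρ^{|β|+1}(|β|+1)^{6+2σ}/((β₂!)^{σ-δ}(|β|!)^δ). Then there is a constant C > 0 such that for all β ∈ ℤ₊² and all γ ≤ β with ⌊|β|/2⌋+1 ≤ |γ| ≤ |β|, one has binom(β,γ) · M_{ρ,β}/(M_{ρ,γ} · M_{ρ,β-γ}) ≤ C/(|β|-|γ|+1)^6. -/

import Mathlib

/-- `M_{ρ,β} = ρ^{|β|+1} (|β|+1)^{6+2σ} / ((β₂!)^{σ-δ} (|β|!)^δ)` for `β ∈ ℤ₊²`. -/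
noncomputable def Mr (σ δ ρ : ℝ) (β : ℕ × ℕ) : ℝ :=
  ρ ^ (β.1 + β.2 + 1) * (((β.1 + β.2 : ℕ) : ℝ) + 1) ^ (6 + 2 * σ) /
    ((Nat.factorial β.2 : ℝ) ^ (σ - δ) * (Nat.factorial (β.1 + β.2) : ℝ) ^ δ)

/-!
Writing `|β| = n`, `|γ| = m`, the quotient `binom(β,γ) M_{ρ,β} / (M_{ρ,γ} M_{ρ,β-γ})` splits into
three factors. The powers of `ρ` leave `1/ρ ≤ 4/ρ₀`. The factorial part is at most `1`, because
`binom(β,γ) ≤ binom(n,m) ≤ binom(n,m)^δ` (Vandermonde, `δ ≥ 1`) and `γ₂! (β₂-γ₂)! ≤ β₂!`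
(with `σ - δ ≥ 0`). The polynomial part is `(n+1)^s / ((m+1)^s (n-m+1)^s)` with `s = 6 + 2σ`;
since `|γ| > |β|/2` we have `n + 1 ≤ 2 (m + 1)`, so it is at most `2^s / (n-m+1)^6`.
-/

open Nat

noncomputable def factorialWeight (σ δ : ℝ) (β : ℕ × ℕ) : ℝ :=
  (β.2 ! : ℝ) ^ (σ - δ) * ((β.1 + β.2)! : ℝ) ^ δ

theorem factorialWeight_pos (σ δ : ℝ) (β : ℕ × ℕ) : 0 < factorialWeight σ δ β := by
  unfold factorialWeight
  positivity

theorem Mr_eq (σ δ ρ : ℝ) (β : ℕ × ℕ) :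
    Mr σ δ ρ β = ρ ^ (β.1 + β.2 + 1) * (((β.1 + β.2 : ℕ) : ℝ) + 1) ^ (6 + 2 * σ) /
      factorialWeight σ δ β :=
  rfl

theorem Nat.choose_mul_choose_le_choose_add (a b i j : ℕ) :
    a.choose i * b.choose j ≤ (a + b).choose (i + j) := by
  rw [Nat.add_choose_eq]
  exact Finset.single_le_sum (f := fun ij : ℕ × ℕ => a.choose ij.1 * b.choose ij.2)
    (fun _ _ => Nat.zero_le _) (a := (i, j)) (Finset.HasAntidiagonal.mem_antidiagonal.mpr rfl)

theorem choose_mul_rpow_factorial_mul_factorial_le {d : ℝ} (hd : 1 ≤ d) {n k : ℕ} (hk : k ≤ n) :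
    (n.choose k : ℝ) * ((k ! : ℝ) * (n - k)!) ^ d ≤ (n ! : ℝ) ^ d := by
  have hchoose : (1 : ℝ) ≤ n.choose k := by exact_mod_cast Nat.choose_pos hk
  calc (n.choose k : ℝ) * ((k ! : ℝ) * (n - k)!) ^ d
      ≤ (n.choose k : ℝ) ^ d * ((k ! : ℝ) * (n - k)!) ^ d := by
        gcongr
        exact Real.self_le_rpow_of_one_le hchoose hd
    _ = (n ! : ℝ) ^ d := by
        rw [← Real.mul_rpow (by positivity) (by positivity), ← mul_assoc]
        exact_mod_cast congrArg (fun x : ℕ => (x : ℝ) ^ d) (Nat.choose_mul_factorial_mul_factorial hk)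

theorem rpow_factorial_mul_factorial_le {s : ℝ} (hs : 0 ≤ s) {n k : ℕ} (hk : k ≤ n) :
    ((k ! : ℝ) * (n - k)!) ^ s ≤ (n ! : ℝ) ^ s := by
  refine Real.rpow_le_rpow (by positivity) ?_ hs
  exact_mod_cast Nat.le_of_dvd (Nat.factorial_pos n) (Nat.factorial_mul_factorial_dvd_factorial hk)

theorem choose_mul_choose_mul_factorialWeight_le {σ δ : ℝ} (hδ : 1 ≤ δ) (hδσ : δ ≤ σ)
    {β γ : ℕ × ℕ} (hγβ : γ ≤ β) :
    (β.1.choose γ.1 : ℝ) * β.2.choose γ.2 *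
        (factorialWeight σ δ γ * factorialWeight σ δ (β - γ)) ≤ factorialWeight σ δ β := by
  obtain ⟨b₁, b₂⟩ := β
  obtain ⟨g₁, g₂⟩ := γ
  obtain ⟨h₁, h₂⟩ := Prod.mk_le_mk.mp hγβ
  have hsub : b₁ - g₁ + (b₂ - g₂) = b₁ + b₂ - (g₁ + g₂) := by omega
  have hchoose : (b₁.choose g₁ : ℝ) * b₂.choose g₂ ≤ (b₁ + b₂).choose (g₁ + g₂) := by
    exact_mod_cast Nat.choose_mul_choose_le_choose_add b₁ b₂ g₁ g₂
  simp only [factorialWeight, Prod.mk_sub_mk, hsub]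
  calc (b₁.choose g₁ : ℝ) * b₂.choose g₂ * ((g₂ ! : ℝ) ^ (σ - δ) * ((g₁ + g₂)! : ℝ) ^ δ *
          (((b₂ - g₂)! : ℝ) ^ (σ - δ) * ((b₁ + b₂ - (g₁ + g₂))! : ℝ) ^ δ))
      = ((g₂ ! : ℝ) * (b₂ - g₂)!) ^ (σ - δ) * ((b₁.choose g₁ : ℝ) * b₂.choose g₂ *
          (((g₁ + g₂)! : ℝ) * (b₁ + b₂ - (g₁ + g₂))!) ^ δ) := by
        rw [Real.mul_rpow (by positivity) (by positivity),
          Real.mul_rpow (by positivity) (by positivity)]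
        ring
    _ ≤ (b₂ ! : ℝ) ^ (σ - δ) * ((b₁ + b₂)! : ℝ) ^ δ := by
        refine mul_le_mul (rpow_factorial_mul_factorial_le (by linarith) h₂) ?_
          (by positivity) (by positivity)
        calc (b₁.choose g₁ : ℝ) * b₂.choose g₂ * (((g₁ + g₂)! : ℝ) * (b₁ + b₂ - (g₁ + g₂))!) ^ δ
            ≤ ((b₁ + b₂).choose (g₁ + g₂) : ℝ) *
                (((g₁ + g₂)! : ℝ) * (b₁ + b₂ - (g₁ + g₂))!) ^ δ := by
              gcongr
          _ ≤ ((b₁ + b₂)! : ℝ) ^ δ :=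
              choose_mul_rpow_factorial_mul_factorial_le hδ (by omega)

theorem Mr_div_Mr_mul_Mr (σ δ : ℝ) {ρ : ℝ} (hρ : ρ ≠ 0) {β γ : ℕ × ℕ} (hγβ : γ ≤ β) :
    Mr σ δ ρ β / (Mr σ δ ρ γ * Mr σ δ ρ (β - γ)) =
      ρ⁻¹ * ((((β.1 + β.2 : ℕ) : ℝ) + 1) ^ (6 + 2 * σ) /
          ((((γ.1 + γ.2 : ℕ) : ℝ) + 1) ^ (6 + 2 * σ) *
            (((β.1 + β.2 - (γ.1 + γ.2) : ℕ) : ℝ) + 1) ^ (6 + 2 * σ))) *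
        (factorialWeight σ δ γ * factorialWeight σ δ (β - γ) / factorialWeight σ δ β) := by
  obtain ⟨h₁, h₂⟩ := Prod.mk_le_mk.mp hγβ
  have hsub : (β - γ).1 + (β - γ).2 = β.1 + β.2 - (γ.1 + γ.2) := by
    simp only [Prod.fst_sub, Prod.snd_sub]
    omega
  have hρpow : ρ ^ (β.1 + β.2 + 1) =
      ρ⁻¹ * (ρ ^ (γ.1 + γ.2 + 1) * ρ ^ (β.1 + β.2 - (γ.1 + γ.2) + 1)) := by
    rw [eq_inv_mul_iff_mul_eq₀ hρ, ← pow_succ' ρ (β.1 + β.2 + 1), ← pow_add]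
    congr 1
    omega
  have := factorialWeight_pos σ δ β
  have := factorialWeight_pos σ δ γ
  have := factorialWeight_pos σ δ (β - γ)
  simp only [Mr_eq, hsub, hρpow]
  field_simp

theorem rpow_div_rpow_mul_rpow_le {x y z s : ℝ} {t : ℕ} (hx : 0 ≤ x) (hy : 0 < y)
    (hxy : x ≤ 2 * y) (hz : 1 ≤ z) (hts : (t : ℝ) ≤ s) :
    x ^ s / (y ^ s * z ^ s) ≤ 2 ^ s / z ^ t := by
  have hs : 0 ≤ s := (Nat.cast_nonneg t).trans hts
  have hzt : z ^ t ≤ z ^ s := by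
    rw [← Real.rpow_natCast]
    exact Real.rpow_le_rpow_of_exponent_le hz hts
  calc x ^ s / (y ^ s * z ^ s) ≤ (2 * y) ^ s / (y ^ s * z ^ t) := by
        gcongr
    _ = 2 ^ s / z ^ t := by
        rw [Real.mul_rpow zero_le_two hy.le, mul_comm (y ^ s),
          mul_div_mul_right _ _ (Real.rpow_pos_of_pos hy s).ne']

theorem binom_M_bound_high_general (σ δ ρ₀ : ℝ) (hδ : 1 ≤ δ) (hδσ : δ ≤ σ)
    (hρ₀ : 0 < ρ₀) :
    ∃ C > 0, ∀ ρ : ℝ, ρ₀ / 4 ≤ ρ → ρ ≤ ρ₀ →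
      ∀ β γ : ℕ × ℕ, γ.1 ≤ β.1 → γ.2 ≤ β.2 →
        (β.1 + β.2) / 2 + 1 ≤ γ.1 + γ.2 → γ.1 + γ.2 ≤ β.1 + β.2 →
        (Nat.choose β.1 γ.1 : ℝ) * (Nat.choose β.2 γ.2 : ℝ) * Mr σ δ ρ β /
            (Mr σ δ ρ γ * Mr σ δ ρ (β.1 - γ.1, β.2 - γ.2)) ≤
          C / ((((β.1 + β.2) - (γ.1 + γ.2) : ℕ) : ℝ) + 1) ^ 6 := by
  refine ⟨4 / ρ₀ * 2 ^ (6 + 2 * σ), by positivity, ?_⟩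
  intro ρ hρ₀ρ _ β γ h₁ h₂ hhalf _
  have hγβ : γ ≤ β := Prod.mk_le_mk.mpr ⟨h₁, h₂⟩
  have hρ : 0 < ρ := by linarith
  have hρinv : ρ⁻¹ ≤ 4 / ρ₀ := by
    simpa only [inv_div] using inv_anti₀ (by positivity) hρ₀ρ
  have hpoly := rpow_div_rpow_mul_rpow_le (x := ((β.1 + β.2 : ℕ) : ℝ) + 1)
    (y := ((γ.1 + γ.2 : ℕ) : ℝ) + 1) (z := ((β.1 + β.2 - (γ.1 + γ.2) : ℕ) : ℝ) + 1) (t := 6)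
    (s := 6 + 2 * σ) (by positivity) (by positivity) (by norm_cast; omega) (by simp)
    (by push_cast; linarith)
  have hweight : (β.1.choose γ.1 : ℝ) * β.2.choose γ.2 *
      (factorialWeight σ δ γ * factorialWeight σ δ (β - γ) / factorialWeight σ δ β) ≤ 1 := by
    rw [← mul_div_assoc, div_le_one (factorialWeight_pos σ δ β)]
    exact choose_mul_choose_mul_factorialWeight_le hδ hδσ hγβ
  rw [mul_div_assoc, show (β.1 - γ.1, β.2 - γ.2) = β - γ from rfl, Mr_div_Mr_mul_Mr σ δ hρ.ne' hγβ,
    mul_left_comm]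
  calc _ ≤ ρ⁻¹ * _ := mul_le_of_le_one_right (by positivity) hweight
    _ ≤ 4 / ρ₀ * (2 ^ (6 + 2 * σ) / _) := mul_le_mul hρinv hpoly (by positivity) (by positivity)
    _ = _ := (mul_div_assoc _ _ _).symm

theorem binom_M_bound_high (σ δ ρ₀ : ℝ) (hσ : 1 ≤ σ) (hδ : 1 ≤ δ) (hδσ : δ ≤ σ)
    (hρ₀ : 0 < ρ₀) :
    ∃ C > 0, ∀ ρ : ℝ, ρ₀ / 4 ≤ ρ → ρ ≤ ρ₀ →
      ∀ β γ : ℕ × ℕ, γ.1 ≤ β.1 → γ.2 ≤ β.2 →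
        (β.1 + β.2) / 2 + 1 ≤ γ.1 + γ.2 → γ.1 + γ.2 ≤ β.1 + β.2 →
        (Nat.choose β.1 γ.1 : ℝ) * (Nat.choose β.2 γ.2 : ℝ) * Mr σ δ ρ β /
            (Mr σ δ ρ γ * Mr σ δ ρ (β.1 - γ.1, β.2 - γ.2)) ≤
          C / ((((β.1 + β.2) - (γ.1 + γ.2) : ℕ) : ℝ) + 1) ^ 6 :=
  binom_M_bound_high_general σ δ ρ₀ hδ hδσ hρ₀
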